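/- For each q ≥ 0, limsup_{d→∞} |c_{d,q}|^{1/d} ≤ 729; equivalently, the complex power series Σ_{d≥0} c_{d,q}·z^d has radius of convergence at least 3^{−6} = 1/729. In particular, the formal solutions of the Picard–Fuchs equation built from these coefficients converge in a neighborhood of the large complex structure limit. -/

import Mathlib

open scoped ENNReal

/-- `a_d(w) = (∏_{r=1}^{3d} (3w+r)²) / (∏_{r=1}^{d} (w+r)⁶)`. -/
noncomputable def aFun (d : ℕ) (w : ℂ) : ℂ :=
  (∏ r ∈ Finset.Icc 1 (3 * d), (3 * w + (r : ℂ)) ^ 2) /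
    (∏ r ∈ Finset.Icc 1 d, (w + (r : ℂ)) ^ 6)

/-- `c_{d,q} = (1/q!)·(d/dw)^q a_d(w)|_{w=0}`, the `q`-th Taylor coefficient of `a_d` at `0`. -/
noncomputable def cCoef (d q : ℕ) : ℂ :=
  iteratedDeriv q (aFun d) 0 / (q.factorial : ℂ)


/-!
On a circle `‖w‖ = ρ < 1` every factor of `a_d` obeys `‖3w + r‖ ≤ r (1 + 3ρ)` and
`‖w + r‖ ≥ r (1 - ρ)`; together with `(3d)! ≤ 27^d (d!)^3` this gives
`‖a_d(w)‖ ≤ (729 ((1 + 3ρ)/(1 - ρ))^6)^d`, so Cauchy's estimate bounds `‖c_{d,q}‖` by `ρ^{-q}` times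
that. Letting `ρ → 0`, the radius of convergence of `∑ c_{d,q} z^d` is at least `1/729`, and the
Cauchy–Hadamard formula turns this into the bound on the `limsup`.
-/

open Finset Nat

theorem Nat.factorial_mul_le_pow_mul_factorial_pow (k n : ℕ) :
    (k * n)! ≤ k ^ (k * n) * n ! ^ k := by
  induction n with
  | zero => simp
  | succ n ih =>
    calc (k * (n + 1))! = (k * n)! * (k * n + 1).ascFactorial k := by
          rw [factorial_mul_ascFactorial, mul_add_one]
      _ ≤ (k ^ (k * n) * n ! ^ k) * (k * (n + 1)) ^ k := by
          gcongr
          exact (ascFactorial_le_pow_add _ _).trans_eq (by rw [mul_add_one])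
      _ = k ^ (k * (n + 1)) * (n + 1)! ^ k := by
          rw [factorial_succ, mul_pow, mul_pow, mul_add_one k n, pow_add]; ring

theorem Nat.factorial_three_mul_sq_le (d : ℕ) : (3 * d)! ^ 2 ≤ 729 ^ d * d ! ^ 6 :=
  calc (3 * d)! ^ 2 ≤ (3 ^ (3 * d) * d ! ^ 3) ^ 2 := by
        gcongr
        exact factorial_mul_le_pow_mul_factorial_pow 3 d
    _ = 729 ^ d * d ! ^ 6 := by
        rw [mul_pow, ← pow_mul, ← pow_mul, mul_right_comm, pow_mul]
        norm_num

theorem prod_Icc_natCast_mul {R : Type*} [CommSemiring R] (n : ℕ) (c : R) :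
    ∏ r ∈ Icc 1 n, ((r : R) * c) = n ! * c ^ n := by
  rw [prod_mul_distrib, prod_const, Nat.card_Icc, add_tsub_cancel_right, ← Nat.cast_prod,
    ← Ico_add_one_right_eq_Icc, prod_Ico_id_eq_factorial]

section RCLike

variable {𝕜 : Type*} [RCLike 𝕜] (z : 𝕜) (n : ℕ)

theorem norm_prod_add_natCast_le : ‖∏ r ∈ Icc 1 n, (z + r)‖ ≤ n ! * (1 + ‖z‖) ^ n := by
  rw [norm_prod, ← prod_Icc_natCast_mul]
  refine prod_le_prod (fun _ _ => norm_nonneg _) fun r hr => ?_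
  have hr1 : (1 : ℝ) ≤ r := by exact_mod_cast (mem_Icc.mp hr).1
  calc ‖z + r‖ ≤ ‖z‖ + r := (norm_add_le _ _).trans_eq (by rw [RCLike.norm_natCast])
    _ ≤ r * (1 + ‖z‖) := by nlinarith [norm_nonneg z]

theorem factorial_mul_pow_le_norm_prod_add_natCast (hz : ‖z‖ ≤ 1) :
    n ! * (1 - ‖z‖) ^ n ≤ ‖∏ r ∈ Icc 1 n, (z + r)‖ := by
  rw [norm_prod, ← prod_Icc_natCast_mul]
  refine prod_le_prod (fun r _ => by have := sub_nonneg.2 hz; positivity) fun r hr => ?_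
  have hr1 : (1 : ℝ) ≤ r := by exact_mod_cast (mem_Icc.mp hr).1
  calc r * (1 - ‖z‖) ≤ r - ‖z‖ := by nlinarith [norm_nonneg z]
    _ ≤ ‖z + r‖ := by
      have := norm_sub_norm_le (r : 𝕜) (-z)
      rw [RCLike.norm_natCast, norm_neg, sub_neg_eq_add, add_comm] at this
      exact this

end RCLike

theorem aFun_eq (d : ℕ) (w : ℂ) :
    aFun d w = (∏ r ∈ Icc 1 (3 * d), (3 * w + r)) ^ 2 / (∏ r ∈ Icc 1 d, (w + r)) ^ 6 := by
  rw [aFun, prod_pow, prod_pow]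

theorem differentiableOn_aFun (d : ℕ) : DifferentiableOn ℂ (aFun d) (Metric.ball 0 1) := by
  refine DifferentiableOn.div (by fun_prop) (by fun_prop) fun w hw => ?_
  rw [prod_pow]
  refine pow_ne_zero _ (norm_pos_iff.mp (lt_of_lt_of_le ?_
    (factorial_mul_pow_le_norm_prod_add_natCast w d (mem_ball_zero_iff.mp hw).le)))
  have := sub_pos.2 (mem_ball_zero_iff.mp hw)
  positivity

noncomputable def aFunGrowth (ρ : ℝ) : ℝ := 729 * ((1 + 3 * ρ) / (1 - ρ)) ^ 6

theorem norm_aFun_le (d : ℕ) {w : ℂ} (hw : ‖w‖ < 1) : ‖aFun d w‖ ≤ aFunGrowth ‖w‖ ^ d := by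
  have hw' : 0 < 1 - ‖w‖ := sub_pos.2 hw
  have hnum := norm_prod_add_natCast_le (3 * w) (3 * d)
  have hden := factorial_mul_pow_le_norm_prod_add_natCast w d hw.le
  have hfact : ((3 * d)! : ℝ) ^ 2 ≤ 729 ^ d * (d ! : ℝ) ^ 6 := by
    exact_mod_cast Nat.factorial_three_mul_sq_le d
  rw [norm_mul, RCLike.norm_ofNat] at hnum
  set s := 1 + 3 * ‖w‖
  set t := 1 - ‖w‖
  calc ‖aFun d w‖ ≤ ((3 * d)! * s ^ (3 * d)) ^ 2 / (d ! * t ^ d) ^ 6 := by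
        rw [aFun_eq, norm_div, norm_pow, norm_pow]
        gcongr
    _ = (3 * d)! ^ 2 / d ! ^ 6 * ((s ^ 6) ^ d / (t ^ 6) ^ d) := by
        rw [← pow_mul, ← pow_mul]
        ring
    _ ≤ 729 ^ d * ((s ^ 6) ^ d / (t ^ 6) ^ d) := by
        gcongr
        rwa [div_le_iff₀ (by positivity)]
    _ = aFunGrowth ‖w‖ ^ d := by rw [aFunGrowth, mul_pow, div_pow, div_pow]

theorem norm_cCoef_le (d q : ℕ) {ρ : ℝ} (hρ₀ : 0 < ρ) (hρ₁ : ρ < 1) :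
    ‖cCoef d q‖ ≤ aFunGrowth ρ ^ d / ρ ^ q := by
  have hdiff : DiffContOnCl ℂ (aFun d) (Metric.ball 0 ρ) :=
    (differentiableOn_aFun d).diffContOnCl_ball (Metric.closedBall_subset_ball hρ₁)
  have hsphere : ∀ w ∈ Metric.sphere (0 : ℂ) ρ, ‖aFun d w‖ ≤ aFunGrowth ρ ^ d := fun w hw => by
    rw [mem_sphere_zero_iff_norm] at hw
    exact hw ▸ norm_aFun_le d (hw.trans_lt hρ₁)
  have hq : (0 : ℝ) < q ! := by exact_mod_cast q.factorial_pos
  rw [cCoef, norm_div, Complex.norm_natCast, div_le_iff₀ hq]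
  refine (Complex.norm_iteratedDeriv_le_of_forall_mem_sphere_norm_le q hρ₀ hdiff
    hsphere).trans_eq ?_
  ring

theorem exists_aFunGrowth_mul_lt_one {r : ℝ} (hr : 729 * r < 1) :
    ∃ ρ : ℝ, 0 < ρ ∧ ρ < 1 ∧ aFunGrowth ρ * r < 1 := by
  have hcont : ContinuousAt (fun ρ => aFunGrowth ρ * r) 0 := by
    unfold aFunGrowth
    fun_prop (disch := norm_num)
  have hlt : ∀ᶠ ρ in nhdsWithin 0 (Set.Ioi 0), aFunGrowth ρ * r < 1 :=
    nhdsWithin_le_nhds (hcont.eventually (gt_mem_nhds (by simpa [aFunGrowth] using hr)))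
  obtain ⟨ρ, hρ, hρ'⟩ := (hlt.and (Ioo_mem_nhdsGT one_pos)).exists
  exact ⟨ρ, hρ'.1, hρ'.2, hρ⟩

open FormalMultilinearSeries

theorem limsup_nnnorm_rpow_eq_inv_radius_ofScalars {𝕜 : Type*} [NontriviallyNormedField 𝕜]
    (c : ℕ → 𝕜) :
    Filter.limsup (fun n : ℕ => (‖c n‖₊ : ℝ≥0∞) ^ (1 / (n : ℝ))) Filter.atTop =
      (ofScalars 𝕜 c).radius⁻¹ := by
  rw [radius_eq_liminf, ENNReal.inv_liminf]
  congr 1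
  funext n
  rw [one_div (ENNReal.ofNNReal _), inv_inv, ENNReal.coe_rpow_of_nonneg _ (by positivity)]
  have : ‖ofScalars 𝕜 c n‖₊ = ‖c n‖₊ := NNReal.eq (ofScalars_norm 𝕜 c n)
  rw [this]

theorem summable_mul_pow_of_mem_eball_radius_ofScalars {𝕜 : Type*} [NontriviallyNormedField 𝕜]
    [CompleteSpace 𝕜] (c : ℕ → 𝕜) {z : 𝕜} (hz : z ∈ Metric.eball 0 (ofScalars 𝕜 c).radius) :
    Summable fun n => c n * z ^ n := by
  simpa only [ofScalars_apply_eq, smul_eq_mul] using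
    ((ofScalars 𝕜 c).summable_norm_apply hz).of_norm

theorem inv_le_radius_ofScalars_cCoef (q : ℕ) :
    (729 : ℝ≥0∞)⁻¹ ≤ (ofScalars ℂ (cCoef · q)).radius := by
  refine ENNReal.le_of_forall_nnreal_lt fun r hr => ?_
  have hr' : 729 * (r : ℝ) < 1 := by
    have h := ENNReal.mul_lt_of_lt_div' (c := 729) (by rwa [one_div])
    have : (729 * r : NNReal) < 1 := by exact_mod_cast h
    exact_mod_cast this
  obtain ⟨ρ, hρ₀, hρ₁, hρr⟩ := exists_aFunGrowth_mul_lt_one hr'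
  have hρ : 0 ≤ aFunGrowth ρ := by have := sub_pos.2 hρ₁; unfold aFunGrowth; positivity
  refine le_radius_of_bound _ (C := 1 / ρ ^ q) fun d => ?_
  rw [ofScalars_norm]
  calc ‖cCoef d q‖ * r ^ d ≤ aFunGrowth ρ ^ d / ρ ^ q * r ^ d := by
        gcongr
        exact norm_cCoef_le d q hρ₀ hρ₁
    _ = (aFunGrowth ρ * r) ^ d / ρ ^ q := by rw [div_mul_eq_mul_div, ← mul_pow]
    _ ≤ 1 / ρ ^ q := by
        gcongr
        exact pow_le_one₀ (by positivity) hρr.le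

/-- For each `q ≥ 0`, `limsup_{d→∞} |c_{d,q}|^{1/d} ≤ 729`; equivalently, the power series
`Σ_{d≥0} c_{d,q}·z^d` has radius of convergence at least `3⁻⁶ = 1/729`. -/
theorem taylor_coefficients_growth (q : ℕ) :
    Filter.limsup (fun d : ℕ => (‖cCoef d q‖₊ : ℝ≥0∞) ^ (1 / (d : ℝ))) Filter.atTop ≤ 729 ∧
    (∀ z : ℂ, ‖z‖ < 1 / 729 → Summable fun d : ℕ => cCoef d q * z ^ d) := by
  have hR := inv_le_radius_ofScalars_cCoef q
  refine ⟨?_, fun z hz => summable_mul_pow_of_mem_eball_radius_ofScalars _ ?_⟩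
  · rw [limsup_nnnorm_rpow_eq_inv_radius_ofScalars]
    exact ENNReal.inv_le_iff_inv_le.mp hR
  · refine mem_eball_zero_iff.2 (lt_of_lt_of_le ?_ hR)
    rw [← ofReal_norm, ← ENNReal.ofReal_ofNat, ← ENNReal.ofReal_inv_of_pos (by norm_num)]
    exact ENNReal.ofReal_lt_ofReal_iff'.2 ⟨by simpa using hz, by norm_num⟩
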